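/- Let n ≥ 2 and m be natural numbers. Suppose for each i ∈ {1,…,m} we are given indices k_i < ℓ_i in {0,…,n−1} and a 2×2 complex unitary matrix A_i, and let Ã_i denote the n×n embedding of A_i at positions (k_i, ℓ_i). Then the matrix entropy of the product satisfies Φ(Ã_m · Ã_{m−1} ⋯ Ã_1) ≤ 2m. -/

import Mathlib

open Matrix

/-- The matrix entropy Φ(M) = −∑_{p,q} |M(p,q)|²·log₂ |M(p,q)|². -/
noncomputable def matrixEntropy {n : ℕ} (M : Matrix (Fin n) (Fin n) ℂ) : ℝ :=
  -∑ p, ∑ q, ‖M p q‖ ^ 2 * Real.logb 2 (‖M p q‖ ^ 2)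

/-- The `n×n` embedding of a `2×2` matrix `A` at positions `(k, l)`:
`Ã(k,k)=A(1,1)`, `Ã(k,l)=A(1,2)`, `Ã(l,k)=A(2,1)`, `Ã(l,l)=A(2,2)`,
`Ã(j,j)=1` for `j ∉ {k,l}`, and all other entries `0`. -/
def embedAt {n : ℕ} (k l : Fin n) (A : Matrix (Fin 2) (Fin 2) ℂ) :
    Matrix (Fin n) (Fin n) ℂ := fun p q =>
  if p = k ∧ q = k then A 0 0
  else if p = k ∧ q = l then A 0 1
  else if p = l ∧ q = k then A 1 0
  else if p = l ∧ q = l then A 1 1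
  else if p = q then 1
  else 0

/-! A factor `embedAt k l A` changes only rows `k` and `l` of `M`, and in each column `q` it maps
`(M k q, M l q)` by the unitary `A`, so it preserves `s_q = |M k q|² + |M l q|²`. Redistributing a
mass `s` between two entries raises `-∑ t log₂ t` by at most `s`: the new pair has entropy at most
`-s log₂ s + s` (Jensen), and the old one at least `-s log₂ s` (monotonicity of `log`). For a
unitary `M` the rows have unit norm, so `∑_q s_q = 2`, and each factor costs at most 2. -/

open Real

namespace Real

lemma negMulLog_add_le {x y : ℝ} (hx : 0 ≤ x) (hy : 0 ≤ y) :
    negMulLog (x + y) ≤ negMulLog x + negMulLog y := by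
  have mul_log_le : ∀ {a b : ℝ}, 0 ≤ a → 0 ≤ b → a * log a ≤ a * log (a + b) := by
    intro a b ha hb
    rcases ha.eq_or_lt with rfl | ha
    · simp
    · exact mul_le_mul_of_nonneg_left (log_le_log ha (by linarith)) ha.le
  have hx' := mul_log_le hx hy
  have hy' : y * log y ≤ y * log (x + y) := add_comm y x ▸ mul_log_le hy hx
  simp only [negMulLog]
  linarith

lemma negMulLog_add_negMulLog_le {x y : ℝ} (hx : 0 ≤ x) (hy : 0 ≤ y) :
    negMulLog x + negMulLog y ≤ negMulLog (x + y) + (x + y) * log 2 := by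
  have jensen := concaveOn_negMulLog.2 (Set.mem_Ici.2 hx) (Set.mem_Ici.2 hy)
    (by norm_num : (0 : ℝ) ≤ 1 / 2) (by norm_num : (0 : ℝ) ≤ 1 / 2) (by norm_num)
  have half : negMulLog (1 / 2 * x + 1 / 2 * y) = (negMulLog (x + y) + (x + y) * log 2) / 2 := by
    rw [← mul_add, negMulLog_mul]
    simp only [negMulLog, one_div, log_inv]
    ring
  simp only [smul_eq_mul] at jensen
  linarith

lemma negMulLog_add_negMulLog_le_of_add_eq {x y x' y' : ℝ} (hx : 0 ≤ x) (hy : 0 ≤ y)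
    (hx' : 0 ≤ x') (hy' : 0 ≤ y') (h : x' + y' = x + y) :
    negMulLog x' + negMulLog y' ≤ negMulLog x + negMulLog y + (x + y) * log 2 := by
  have := negMulLog_add_negMulLog_le hx' hy'
  rw [h] at this
  linarith [negMulLog_add_le hx hy]

end Real

namespace Matrix

variable {𝕜 ι : Type*} [RCLike 𝕜] [Fintype ι] [DecidableEq ι] {U : Matrix ι ι 𝕜}

lemma sum_norm_sq_mulVec_of_mem_unitaryGroup (hU : U ∈ unitaryGroup ι 𝕜) (v : ι → 𝕜) :
    ∑ i, ‖(U *ᵥ v) i‖ ^ 2 = ∑ i, ‖v i‖ ^ 2 := by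
  have h : star (U *ᵥ v) ⬝ᵥ (U *ᵥ v) = star v ⬝ᵥ v := by
    rw [star_mulVec, dotProduct_mulVec, vecMul_vecMul, ← star_eq_conjTranspose,
      (mem_unitaryGroup_iff'.1 hU), vecMul_one]
  simp only [dotProduct, Pi.star_apply, RCLike.star_def, RCLike.conj_mul] at h
  exact_mod_cast h

lemma sum_norm_sq_row_of_mem_unitaryGroup (hU : U ∈ unitaryGroup ι 𝕜) (i : ι) :
    ∑ j, ‖U i j‖ ^ 2 = 1 := by
  have h := congrFun (congrFun (mem_unitaryGroup_iff.1 hU) i) i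
  simp only [mul_apply, star_apply, RCLike.star_def, RCLike.mul_conj, one_apply_eq] at h
  exact_mod_cast h

end Matrix

section embedAt

variable {n : ℕ} {k l : Fin n} {A : Matrix (Fin 2) (Fin 2) ℂ}

lemma embedAt_mulVec_apply_left (hkl : k ≠ l) (v : Fin n → ℂ) :
    (embedAt k l A *ᵥ v) k = A 0 0 * v k + A 0 1 * v l := by
  rw [mulVec, dotProduct,
    Fintype.sum_eq_add k l hkl fun j hj => by simp [embedAt, hj.1, hj.2, Ne.symm hj.1]]
  simp [embedAt, hkl.symm]

lemma embedAt_mulVec_apply_right (hkl : k ≠ l) (v : Fin n → ℂ) :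
    (embedAt k l A *ᵥ v) l = A 1 0 * v k + A 1 1 * v l := by
  rw [mulVec, dotProduct,
    Fintype.sum_eq_add k l hkl fun j hj => by simp [embedAt, hj.1, hj.2, hkl.symm, Ne.symm hj.2]]
  simp [embedAt, hkl.symm]

lemma embedAt_mulVec_apply_of_ne {p : Fin n} (hk : p ≠ k) (hl : p ≠ l) (v : Fin n → ℂ) :
    (embedAt k l A *ᵥ v) p = v p := by
  rw [mulVec, dotProduct, Fintype.sum_eq_single p fun j hj => by simp [embedAt, hk, hl, hj.symm]]
  simp [embedAt, hk, hl]

lemma embedAt_conjTranspose : (embedAt k l A)ᴴ = embedAt k l Aᴴ := by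
  ext p q
  simp only [conjTranspose_apply, embedAt]
  split_ifs <;> grind [star_zero, star_one]

lemma embedAt_one : embedAt k l 1 = 1 := by
  ext p q
  simp only [embedAt, one_apply]
  split_ifs <;> grind

lemma embedAt_mul (hkl : k ≠ l) {B : Matrix (Fin 2) (Fin 2) ℂ} :
    embedAt k l A * embedAt k l B = embedAt k l (A * B) := by
  ext p q
  change (embedAt k l A *ᵥ fun j => embedAt k l B j q) p = _
  by_cases hk : p = k
  · subst hk
    rw [embedAt_mulVec_apply_left hkl]
    simp only [embedAt, mul_apply, Fin.sum_univ_two]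
    split_ifs <;> grind
  by_cases hl : p = l
  · subst hl
    rw [embedAt_mulVec_apply_right hkl]
    simp only [embedAt, mul_apply, Fin.sum_univ_two]
    split_ifs <;> grind
  rw [embedAt_mulVec_apply_of_ne hk hl]
  simp only [embedAt]
  split_ifs <;> grind

lemma embedAt_mem_unitaryGroup (hkl : k ≠ l) (hA : A ∈ unitaryGroup (Fin 2) ℂ) :
    embedAt k l A ∈ unitaryGroup (Fin n) ℂ := by
  rw [mem_unitaryGroup_iff', star_eq_conjTranspose, embedAt_conjTranspose, embedAt_mul hkl,
    ← star_eq_conjTranspose, mem_unitaryGroup_iff'.1 hA, embedAt_one]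

end embedAt

section entropy

variable {n : ℕ}

lemma matrixEntropy_eq_sum_negMulLog (M : Matrix (Fin n) (Fin n) ℂ) :
    matrixEntropy M = (∑ q, ∑ p, negMulLog (‖M p q‖ ^ 2)) / log 2 := by
  rw [matrixEntropy, Finset.sum_comm, ← Finset.sum_neg_distrib, Finset.sum_div]
  refine Finset.sum_congr rfl fun q _ => ?_
  rw [← Finset.sum_neg_distrib, Finset.sum_div]
  refine Finset.sum_congr rfl fun p _ => ?_
  rw [negMulLog, logb]
  ring

lemma matrixEntropy_one : matrixEntropy (1 : Matrix (Fin n) (Fin n) ℂ) = 0 := by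
  simp [matrixEntropy, one_apply, apply_ite]

variable {k l : Fin n} {A : Matrix (Fin 2) (Fin 2) ℂ}

lemma sum_negMulLog_embedAt_mulVec_le (hkl : k ≠ l) (hA : A ∈ unitaryGroup (Fin 2) ℂ)
    (v : Fin n → ℂ) :
    ∑ p, negMulLog (‖(embedAt k l A *ᵥ v) p‖ ^ 2) ≤
      ∑ p, negMulLog (‖v p‖ ^ 2) + (‖v k‖ ^ 2 + ‖v l‖ ^ 2) * log 2 := by
  set w := embedAt k l A *ᵥ v
  have hnorm : ‖w k‖ ^ 2 + ‖w l‖ ^ 2 = ‖v k‖ ^ 2 + ‖v l‖ ^ 2 := by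
    have := sum_norm_sq_mulVec_of_mem_unitaryGroup hA ![v k, v l]
    simpa [w, Fin.sum_univ_two, mulVec, dotProduct, embedAt_mulVec_apply_left hkl,
      embedAt_mulVec_apply_right hkl] using this
  have hsplit : ∑ p, (negMulLog (‖w p‖ ^ 2) - negMulLog (‖v p‖ ^ 2)) =
      (negMulLog (‖w k‖ ^ 2) - negMulLog (‖v k‖ ^ 2)) +
        (negMulLog (‖w l‖ ^ 2) - negMulLog (‖v l‖ ^ 2)) :=
    Fintype.sum_eq_add k l hkl fun p hp => by
      rw [show w p = v p from embedAt_mulVec_apply_of_ne hp.1 hp.2 v, sub_self]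
  have := negMulLog_add_negMulLog_le_of_add_eq (sq_nonneg ‖v k‖) (sq_nonneg ‖v l‖)
    (sq_nonneg ‖w k‖) (sq_nonneg ‖w l‖) hnorm
  rw [Finset.sum_sub_distrib] at hsplit
  linarith

lemma matrixEntropy_embedAt_mul_le (hkl : k ≠ l) (hA : A ∈ unitaryGroup (Fin 2) ℂ)
    {M : Matrix (Fin n) (Fin n) ℂ} (hM : M ∈ unitaryGroup (Fin n) ℂ) :
    matrixEntropy (embedAt k l A * M) ≤ matrixEntropy M + 2 := by
  have hrows : ∑ q, (‖M k q‖ ^ 2 + ‖M l q‖ ^ 2) = 2 := by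
    rw [Finset.sum_add_distrib, sum_norm_sq_row_of_mem_unitaryGroup hM,
      sum_norm_sq_row_of_mem_unitaryGroup hM]
    norm_num
  have hlog : 0 < log 2 := log_pos one_lt_two
  rw [matrixEntropy_eq_sum_negMulLog, matrixEntropy_eq_sum_negMulLog, div_add' _ _ _ hlog.ne',
    div_le_div_iff_of_pos_right hlog]
  calc ∑ q, ∑ p, negMulLog (‖(embedAt k l A * M) p q‖ ^ 2)
      ≤ ∑ q, (∑ p, negMulLog (‖M p q‖ ^ 2) + (‖M k q‖ ^ 2 + ‖M l q‖ ^ 2) * log 2) :=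
        Finset.sum_le_sum fun q _ => sum_negMulLog_embedAt_mulVec_le hkl hA fun j => M j q
    _ = ∑ q, ∑ p, negMulLog (‖M p q‖ ^ 2) + 2 * log 2 := by
        rw [Finset.sum_add_distrib, ← Finset.sum_mul, hrows]

lemma matrixEntropy_list_prod_le (L : List (Matrix (Fin n) (Fin n) ℂ))
    (hL : ∀ B ∈ L, ∃ (k l : Fin n) (A : Matrix (Fin 2) (Fin 2) ℂ),
      k ≠ l ∧ A ∈ unitaryGroup (Fin 2) ℂ ∧ B = embedAt k l A) :
    matrixEntropy L.prod ≤ 2 * L.length := by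
  induction L with
  | nil => simp [matrixEntropy_one]
  | cons B L ih =>
    have hL' : ∀ C ∈ L, _ := fun C hC => hL C (List.mem_cons_of_mem B hC)
    have hprod : L.prod ∈ unitaryGroup (Fin n) ℂ := Submonoid.list_prod_mem _ fun C hC => by
      obtain ⟨k, l, A, hkl, hA, rfl⟩ := hL' C hC
      exact embedAt_mem_unitaryGroup hkl hA
    obtain ⟨k, l, A, hkl, hA, rfl⟩ := hL _ List.mem_cons_self
    rw [List.prod_cons, List.length_cons, Nat.cast_succ]
    linarith [matrixEntropy_embedAt_mul_le hkl hA hprod, ih hL']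

end entropy

theorem matrixEntropy_prod_le_general {n m : ℕ}
    (k l : Fin m → Fin n) (hkl : ∀ i, k i < l i)
    (A : Fin m → Matrix (Fin 2) (Fin 2) ℂ) (hA : ∀ i, (A i)ᴴ * A i = 1) :
    matrixEntropy
      ((List.ofFn fun i : Fin m => embedAt (k i) (l i) (A i)).reverse.prod)
      ≤ 2 * m := by
  have h := matrixEntropy_list_prod_le _ fun B hB => by
    obtain ⟨i, rfl⟩ := List.mem_ofFn.1 (List.mem_reverse.1 hB)
    exact ⟨k i, l i, A i, (hkl i).ne, mem_unitaryGroup_iff'.2 (hA i), rfl⟩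
  simpa using h

theorem matrixEntropy_prod_le {n m : ℕ} (hn : 2 ≤ n)
    (k l : Fin m → Fin n) (hkl : ∀ i, k i < l i)
    (A : Fin m → Matrix (Fin 2) (Fin 2) ℂ) (hA : ∀ i, (A i)ᴴ * A i = 1) :
    matrixEntropy
      ((List.ofFn fun i : Fin m => embedAt (k i) (l i) (A i)).reverse.prod)
      ≤ 2 * m :=
  matrixEntropy_prod_le_general k l hkl A hA
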